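/- arXiv:2008.01925 — 2 statements merged into one kernel-verified Lean document; each statement's English description precedes it below -/
import Mathlib

section
/- Let (S, ·) be a layered semigroup with layering map ℓ : S → ℕ and layers S_i = ℓ⁻¹({i}), let F be a locally finite collection of regressive maps on S, and suppose there exists an F-Ramsey sequence (U_i)_{i∈ℕ} of ultrafilters on S. Then for every n, m ∈ ℕ, every r ≥ 1, and every coloring c : S → {0,…,r−1}, there exist x_1,…,x_m ∈ S_n such that for every k ≤ n the set S_k ∩ { f_1(x_{n_1}) · ⋯ · f_ℓ(x_{n_ℓ}) : ℓ ≥ 1, 1 ≤ n_1 < ⋯ < n_ℓ ≤ m, f_1,…,f_ℓ ∈ F } is c-monochromatic (c is constant on it). -/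
/-!
The argument is Galvin–Glazer's. The Ramsey condition gives `U i · U j = U (max i j)`, so
the ultrafilters `U k`, `k ≤ n`, form a finite set `𝒰` closed under products. Let `A` be
the set of `s` with `ℓ s ≤ n` whose colour is the one `U (ℓ s)` concentrates on; then
`A ∈ U k` for all `k ≤ n`, and so is `A⋆ = {s ∈ A | s⁻¹A ∈ V for all V ∈ 𝒰}`, which moreover
satisfies `s⁻¹A⋆ ∈ V` for `s ∈ A⋆`, `V ∈ 𝒰`. Build `x₁, x₂, …` one at a time so that all
combinations stay in `A⋆`: given the finitely many combinations `y` so far, pick `w` in layer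
`n` with `f w ∈ A⋆` and `y · f w ∈ A⋆` for all `f ∈ F`. This is a condition of the form
`w ∈ f⁻¹ T` with `T ∈ V` for all `V ∈ 𝒰`, and `f⁻¹ T ∈ U n` since `map f (U n) ∈ 𝒰`; local
finiteness makes these finitely many conditions on the layer `n`, so they hold together
`U n`-almost surely. Combinations inside one layer `k` then all have the colour of `U k`.
-/

/-- A regressive map on a layered semigroup `(S, ·, ℓ)`. -/
def IsRegressive {S : Type*} [Semigroup S] (ℓ : S → ℕ) (f : S → S) : Prop :=
  (∀ s t : S, f (s * t) = f s * f t) ∧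
  (∀ s : S, ℓ (f s) ≤ ℓ s) ∧
  (∀ s t : S, ℓ s ≤ ℓ t → ℓ (f s) ≤ ℓ (f t)) ∧
  (∀ s t : S, |(ℓ (f s) : ℤ) - (ℓ (f t) : ℤ)| ≤ |(ℓ s : ℤ) - (ℓ t : ℤ)|)

/-- A collection of maps on `S` is locally finite if for every `i` the set of
restrictions to `ℓ⁻¹({0,…,i})` is finite. -/
def IsLocallyFinite {S : Type*} (ℓ : S → ℕ) (F : Set (S → S)) : Prop :=
  ∀ i : ℕ, Set.Finite { g : {s : S // ℓ s ≤ i} → S | ∃ f ∈ F, g = fun s => f s.val }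

/-- The product of two ultrafilters on a semigroup:
`A ∈ uMul U V ↔ {s | {t | s * t ∈ A} ∈ V} ∈ U`. -/
def uMul {S : Type*} [Semigroup S] (U V : Ultrafilter S) : Ultrafilter S :=
  U.bind fun s => V.map fun t => s * t

/-- A sequence of ultrafilters `U i` concentrated on the layers `S_i` is `F`-coherent if
it is closed under pushforwards along all maps in `F`. -/
def FCoherent {S : Type*} [Semigroup S] (ℓ : S → ℕ) (F : Set (S → S))
    (U : ℕ → Ultrafilter S) : Prop :=
  (∀ i : ℕ, {s : S | ℓ s = i} ∈ U i) ∧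
  (∀ f ∈ F, ∀ j : ℕ, ∃ k ≤ j, Ultrafilter.map f (U j) = U k)

/-- An `F`-coherent sequence is `F`-Ramsey if moreover `U j · U i = U i · U j = U j`
whenever `i ≤ j`. -/
def FRamsey {S : Type*} [Semigroup S] (ℓ : S → ℕ) (F : Set (S → S))
    (U : ℕ → Ultrafilter S) : Prop :=
  FCoherent ℓ F U ∧
  ∀ i j : ℕ, i ≤ j → uMul (U j) (U i) = U j ∧ uMul (U i) (U j) = U j

/-- Fold of a nonempty tuple from the left: `g 0 * g 1 * ⋯ * g m`. -/
def finFold {S : Type*} (op : S → S → S) (m : ℕ) (g : Fin (m + 1) → S) : S :=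
  (List.ofFn fun a : Fin m => g a.succ).foldl op (g 0)

/-- The set of all products `f₁(x_{n₁}) · ⋯ · f_ℓ(x_{n_ℓ})` with `ℓ ≥ 1`,
`n₁ < ⋯ < n_ℓ` and `f₁, …, f_ℓ ∈ F`. -/
def ComboSet {S : Type*} [Semigroup S] (F : Set (S → S)) (x : ℕ → S) : Set S :=
  { s | ∃ (m : ℕ) (idx : Fin (m + 1) → ℕ) (fs : Fin (m + 1) → S → S),
      StrictMono idx ∧ (∀ a, fs a ∈ F) ∧
      s = finFold (· * ·) m fun a => fs a (x (idx a)) }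

/-- The set of all products `f₁(x_{n₁}) · ⋯ · f_ℓ(x_{n_ℓ})` with `ℓ ≥ 1`,
`n₁ < ⋯ < n_ℓ` indices of the finite tuple `x`, and `f₁, …, f_ℓ ∈ F`. -/
def ComboSetFin {S : Type*} [Semigroup S] (F : Set (S → S)) {m : ℕ}
    (x : Fin m → S) : Set S :=
  { s | ∃ (l : ℕ) (idx : Fin (l + 1) → Fin m) (fs : Fin (l + 1) → S → S),
      StrictMono idx ∧ (∀ a, fs a ∈ F) ∧
      s = finFold (· * ·) l fun a => fs a (x (idx a)) }

theorem mem_uMul {S : Type*} [Semigroup S] {U V : Ultrafilter S} {A : Set S} :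
    A ∈ uMul U V ↔ {s | {t | s * t ∈ A} ∈ V} ∈ U :=
  Iff.rfl

theorem FRamsey.uMul_eq {S : Type*} [Semigroup S] {ℓ : S → ℕ} {F : Set (S → S)}
    {U : ℕ → Ultrafilter S} (hU : FRamsey ℓ F U) (i j : ℕ) :
    uMul (U i) (U j) = U (max i j) := by
  rcases le_total i j with h | h
  · rw [max_eq_right h, (hU.2 i j h).2]
  · rw [max_eq_left h, (hU.2 j i h).1]

theorem FRamsey.uMul_mem_image_Iic {S : Type*} [Semigroup S] {ℓ : S → ℕ} {F : Set (S → S)}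
    {U : ℕ → Ultrafilter S} (hU : FRamsey ℓ F U) (n : ℕ) :
    ∀ V ∈ U '' Set.Iic n, ∀ V' ∈ U '' Set.Iic n, uMul V V' ∈ U '' Set.Iic n := by
  rintro _ ⟨i, hi, rfl⟩ _ ⟨j, hj, rfl⟩
  exact ⟨_, Set.mem_Iic.2 (max_le hi hj), (hU.uMul_eq i j).symm⟩

theorem FRamsey.map_mem_image_Iic {S : Type*} [Semigroup S] {ℓ : S → ℕ} {F : Set (S → S)}
    {U : ℕ → Ultrafilter S} (hU : FRamsey ℓ F U) {f : S → S} (hf : f ∈ F) (n : ℕ) :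
    (U n).map f ∈ U '' Set.Iic n :=
  let ⟨k, hk, h⟩ := hU.1.2 f hf n
  ⟨k, hk, h.symm⟩

theorem IsLocallyFinite.finite_image {S β : Type*} {ℓ : S → ℕ} {F : Set (S → S)}
    (hF : IsLocallyFinite ℓ F) (n : ℕ) (Φ : (S → S) → β)
    (hΦ : ∀ f g : S → S, (∀ s, ℓ s ≤ n → f s = g s) → Φ f = Φ g) :
    (Φ '' F).Finite := by
  classical
  let extend (g : {s : S // ℓ s ≤ n} → S) : S → S := fun s =>
    if h : ℓ s ≤ n then g ⟨s, h⟩ else s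
  refine ((hF n).image fun g => Φ (extend g)).subset ?_
  rintro _ ⟨f, hf, rfl⟩
  exact ⟨_, ⟨f, hf, rfl⟩, hΦ _ _ fun s hs => by simp [extend, hs]⟩

section Star

variable {S : Type*} [Semigroup S] {𝒰 : Set (Ultrafilter S)} {A : Set S}

def starSet (𝒰 : Set (Ultrafilter S)) (A : Set S) : Set S :=
  {s | s ∈ A ∧ ∀ V ∈ 𝒰, {t | s * t ∈ A} ∈ V}

theorem starSet_subset : starSet 𝒰 A ⊆ A := fun _ hs => hs.1

variable (h𝒰 : 𝒰.Finite) (hmul : ∀ V ∈ 𝒰, ∀ W ∈ 𝒰, uMul V W ∈ 𝒰)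
include h𝒰 hmul

theorem starSet_mem (hA : ∀ V ∈ 𝒰, A ∈ V) {V : Ultrafilter S} (hV : V ∈ 𝒰) :
    starSet 𝒰 A ∈ V :=
  Filter.Eventually.and (hA V hV) <| (Filter.eventually_all_finite h𝒰).2 fun W hW =>
    mem_uMul.1 (hA _ (hmul V hV W hW))

theorem preimage_mul_starSet_mem {s : S} (hs : s ∈ starSet 𝒰 A) {V : Ultrafilter S}
    (hV : V ∈ 𝒰) : {t | s * t ∈ starSet 𝒰 A} ∈ V := by
  refine Filter.Eventually.and (hs.2 V hV) <| (Filter.eventually_all_finite h𝒰).2 fun W hW => ?_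
  have h := mem_uMul.1 (hs.2 _ (hmul V hV W hW))
  simp only [Set.mem_ofPred_eq, ← mul_assoc] at h
  exact h

end Star

section ComboSetFin

variable {S : Type*}

theorem finFold_zero (op : S → S → S) (g : Fin 1 → S) : finFold op 0 g = g 0 := by
  simp [finFold]

theorem finFold_succ (op : S → S → S) {l : ℕ} (g : Fin (l + 2) → S) :
    finFold op (l + 1) g = op (finFold op l fun a => g a.castSucc) (g (Fin.last (l + 1))) := by
  rw [finFold, List.ofFn_succ', List.concat_eq_append, List.foldl_concat]
  simp [finFold, Fin.succ_castSucc, -Fin.castSucc_succ]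

variable [Semigroup S] {F : Set (S → S)} {m : ℕ}

theorem comboSetFin_fin_zero (x : Fin 0 → S) : ComboSetFin F x = ∅ :=
  Set.eq_empty_of_forall_notMem fun _ ⟨_, idx, _⟩ => (idx 0).elim0

theorem finFold_mem_comboSetFin_of_ne_last {x : Fin m → S} {w : S} {l : ℕ}
    {idx : Fin (l + 1) → Fin (m + 1)} (hidx : StrictMono idx) (hne : ∀ a, idx a ≠ Fin.last m)
    {fs : Fin (l + 1) → S → S} (hfs : ∀ a, fs a ∈ F) :
    finFold (· * ·) l (fun a => fs a (Fin.snoc (α := fun _ => S) x w (idx a))) ∈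
      ComboSetFin F x := by
  refine ⟨l, fun a => (idx a).castPred (hne a), fs,
    fun a b hab => Fin.castPred_lt_castPred_iff.2 (hidx hab), hfs, ?_⟩
  congr! with a
  conv_lhs => rw [← Fin.castSucc_castPred (idx a) (hne a)]
  exact Fin.snoc_castSucc ..

theorem comboSetFin_snoc_subset (x : Fin m → S) (w : S) :
    ComboSetFin F (Fin.snoc x w : Fin (m + 1) → S) ⊆
      ComboSetFin F x ∪ ((fun f => f w) '' F ∪
        Set.image2 (· * ·) (ComboSetFin F x) ((fun f => f w) '' F)) := by
  rintro _ ⟨l, idx, fs, hidx, hfs, rfl⟩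
  by_cases hlast : idx (Fin.last l) = Fin.last m
  · have hw : Fin.snoc (α := fun _ => S) x w (idx (Fin.last l)) = w := by
      rw [hlast, Fin.snoc_last]
    cases l with
    | zero =>
      exact Or.inr <| Or.inl ⟨fs 0, hfs 0, by rw [finFold_zero]; exact congrArg (fs 0) hw.symm⟩
    | succ l =>
      refine Or.inr <| Or.inr ⟨_, finFold_mem_comboSetFin_of_ne_last (w := w)
        (hidx.comp Fin.strictMono_castSucc) (fun a => ?_) (fs := fun a => fs a.castSucc)
        (fun a => hfs _), _, ⟨_, hfs (Fin.last _), rfl⟩, by rw [finFold_succ, hw]; rfl⟩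
      exact hlast ▸ (hidx (Fin.castSucc_lt_last a)).ne
  · refine Or.inl <| finFold_mem_comboSetFin_of_ne_last hidx (fun a ha => hlast ?_) hfs
    exact le_antisymm (Fin.le_last _) (ha ▸ hidx.monotone (Fin.le_last a))

end ComboSetFin

section Construction

variable {S : Type*} [Semigroup S] {ℓ : S → ℕ} {F : Set (S → S)} {𝒰 : Set (Ultrafilter S)}
  {W : Ultrafilter S} {n : ℕ} {A : Set S}
  (h𝒰 : 𝒰.Finite) (hmul : ∀ V ∈ 𝒰, ∀ V' ∈ 𝒰, uMul V V' ∈ 𝒰)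
  (hW : ∀ f ∈ F, W.map f ∈ 𝒰) (hWn : {s | ℓ s = n} ∈ W) (hF : IsLocallyFinite ℓ F)
  (hA : ∀ V ∈ 𝒰, A ∈ V)
include h𝒰 hmul hW hWn hF hA

theorem exists_extension {C : Set S} (hC : C.Finite) (hCA : C ⊆ starSet 𝒰 A) :
    ∃ w, ℓ w = n ∧ ∀ f ∈ F, f w ∈ starSet 𝒰 A ∧ ∀ y ∈ C, y * f w ∈ starSet 𝒰 A := by
  set T := starSet 𝒰 A ∩ ⋂ y ∈ C, {t | y * t ∈ starSet 𝒰 A}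
  have hT : ∀ V ∈ 𝒰, T ∈ V := fun V hV =>
    Filter.inter_mem (starSet_mem h𝒰 hmul hA hV) <| (Filter.biInter_mem hC).2 fun y hy =>
      preimage_mul_starSet_mem h𝒰 hmul (hCA hy) hV
  have hfin : ((fun f => f ⁻¹' T ∩ {s | ℓ s = n}) '' F).Finite :=
    hF.finite_image n _ fun f g hfg => Set.ext fun s => and_congr_left fun hs => by
      rw [Set.mem_preimage, Set.mem_preimage, hfg s (le_of_eq hs)]
  have hmem : ⋂₀ ((fun f => f ⁻¹' T ∩ {s | ℓ s = n}) '' F) ∩ {s | ℓ s = n} ∈ W := by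
    refine Filter.inter_mem ((Filter.sInter_mem hfin).2 ?_) hWn
    rintro _ ⟨f, hf, rfl⟩
    exact Filter.inter_mem (Ultrafilter.mem_map.1 (hT _ (hW f hf))) hWn
  obtain ⟨w, hwT, hw⟩ := W.nonempty_of_mem hmem
  refine ⟨w, hw, fun f hf => ?_⟩
  obtain ⟨⟨hfw, hfwC⟩, -⟩ := hwT _ ⟨f, hf, rfl⟩
  exact ⟨hfw, fun y hy => Set.mem_iInter₂.1 hfwC y hy⟩

theorem exists_tuple_comboSetFin_subset (m : ℕ) :
    ∃ x : Fin m → S, (∀ i, ℓ (x i) = n) ∧ ComboSetFin F x ⊆ A := by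
  suffices ∀ m, ∃ x : Fin m → S, (∀ i, ℓ (x i) = n) ∧ (ComboSetFin F x).Finite ∧
      ComboSetFin F x ⊆ starSet 𝒰 A by
    obtain ⟨x, hx, -, hxA⟩ := this m
    exact ⟨x, hx, hxA.trans starSet_subset⟩
  intro m
  induction m with
  | zero => exact ⟨Fin.elim0, fun i => i.elim0, by simp [comboSetFin_fin_zero]⟩
  | succ m ih =>
    obtain ⟨x, hx, hfin, hxA⟩ := ih
    obtain ⟨w, hw, hwA⟩ := exists_extension h𝒰 hmul hW hWn hF hA hfin hxA
    have hV : ((fun f => f w) '' F).Finite :=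
      hF.finite_image n _ fun f g hfg => hfg w hw.le
    refine ⟨Fin.snoc x w, Fin.forall_fin_succ'.2 ⟨by simpa using hx, by simpa using hw⟩,
      (hfin.union (hV.union (hfin.image2 _ hV))).subset (comboSetFin_snoc_subset x w),
      (comboSetFin_snoc_subset x w).trans ?_⟩
    rintro _ (hy | ⟨f, hf, rfl⟩ | ⟨y, hy, _, ⟨f, hf, rfl⟩, rfl⟩)
    exacts [hxA hy, (hwA f hf).1, (hwA f hf).2 y hy]

end Construction

theorem ramsey_statement_finite_general {S : Type*} [Semigroup S] (ℓ : S → ℕ)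
    (F : Set (S → S))
    (hlf : IsLocallyFinite ℓ F)
    (U : ℕ → Ultrafilter S) (hU : FRamsey ℓ F U)
    (n m r : ℕ) (c : S → Fin r) :
    ∃ x : Fin m → S, (∀ i, ℓ (x i) = n) ∧
      ∀ k ≤ n, ∀ y ∈ {s : S | ℓ s = k} ∩ ComboSetFin F x,
        ∀ z ∈ {s : S | ℓ s = k} ∩ ComboSetFin F x, c y = c z := by
  have hlayer := hU.1.1
  choose e he using fun k => (U k).eventually_exists_iff (P := fun e s => c s = e) |>.1
    (Filter.Eventually.of_forall fun s => ⟨c s, rfl⟩)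
  set A := {s | ℓ s ≤ n ∧ c s = e (ℓ s)}
  have hA : ∀ V ∈ U '' Set.Iic n, A ∈ V := by
    rintro _ ⟨k, hk, rfl⟩
    filter_upwards [hlayer k, he k] with s hs hc
    exact ⟨hs ▸ hk, hs ▸ hc⟩
  obtain ⟨x, hx, hxA⟩ := exists_tuple_comboSetFin_subset ((Set.finite_Iic n).image U)
    (hU.uMul_mem_image_Iic n) (fun f hf => hU.map_mem_image_Iic hf n) (hlayer n) hlf hA m
  refine ⟨x, hx, fun k _ y ⟨hy, hyx⟩ z ⟨hz, hzx⟩ => ?_⟩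
  exact (hxA hyx).2.trans ((congrArg e (hy.trans hz.symm)).trans (hxA hzx).2.symm)

/-- If a layered semigroup `(S, ℓ)` with a locally finite collection `F` of regressive
maps admits an `F`-Ramsey sequence of ultrafilters, then for every `n, m`, every finite
coloring of `S` admits a finite tuple `x₁, …, x_m ∈ S_n` all of whose combinations lying
in a layer `S_k` with `k ≤ n` form a monochromatic set. -/
theorem ramsey_statement_finite {S : Type*} [Semigroup S] (ℓ : S → ℕ)
    (hlay : ∀ s t : S, ℓ (s * t) = max (ℓ s) (ℓ t))
    (F : Set (S → S)) (hreg : ∀ f ∈ F, IsRegressive ℓ f)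
    (hlf : IsLocallyFinite ℓ F)
    (U : ℕ → Ultrafilter S) (hU : FRamsey ℓ F U)
    (n m r : ℕ) (hr : 1 ≤ r) (c : S → Fin r) :
    ∃ x : Fin m → S, (∀ i, ℓ (x i) = n) ∧
      ∀ k ≤ n, ∀ y ∈ {s : S | ℓ s = k} ∩ ComboSetFin F x,
        ∀ z ∈ {s : S | ℓ s = k} ∩ ComboSetFin F x, c y = c z :=
  ramsey_statement_finite_general ℓ F hlf U hU n m r c
end

section
/- Let A be a nonempty finite alphabet, let W_0 be the set of nonempty finite words over A, let W_1 be the set of nonempty finite words over A ∪ {x} in which the variable x occurs, and let T = W_0 ∪ W_1, a semigroup under concatenation. For a ∈ A and u ∈ T, let u[a] denote the word obtained from u by replacing every occurrence of x by a. Then there exist ultrafilters ν and ω on T with W_0 ∈ ν and W_1 ∈ ω such that ν·ν = ν, ω·ω = ω, ω·ν = ν·ω = ω, and Ultrafilter.map (u ↦ u[a]) ω = ν for every a ∈ A. -/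
/-- Words over `A ∪ {x}` are lists of `Option A`, with `none` playing the role of the
variable `x`. `W₀` is the set of nonempty words over `A` (no occurrence of `x`). -/
def HJW0 (A : Type*) : Set (List (Option A)) := { w | w ≠ [] ∧ ¬ (none ∈ w) }

/-- `W₁` is the set of nonempty words over `A ∪ {x}` in which the variable `x`
(encoded as `none`) occurs. -/
def HJW1 (A : Type*) : Set (List (Option A)) := { w | w ≠ [] ∧ none ∈ w }

/-- Substitution of the letter `a` for the variable `x` in a word. -/
def HJsubst {A : Type*} (a : A) (w : List (Option A)) : List (Option A) :=
  w.map fun o => some (o.getD a)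

/-- The product of two ultrafilters with respect to a binary operation `op`:
`B ∈ uProd op U V ↔ {s | {t | op s t ∈ B} ∈ V} ∈ U`. -/
def uProd {S : Type*} (op : S → S → S) (U V : Ultrafilter S) : Ultrafilter S :=
  U.bind fun s => V.map (op s)

/-!
Hales–Jewett, applied to the finitely many membership patterns of a finite family of sets,
shows that the sets `{w ∈ W₁ | the words w[a], a ∈ A, are all in B or all outside B}` have the
finite intersection property; an ultrafilter containing them lies in the closed subsemigroup `C`
of ultrafilters on `W₁` whose images under all substitutions agree. An idempotent of `C` pushes
forward to an idempotent `ν` concentrated on `W₀`. The ultrafilters `u` on `W₁` with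
`u[a] = ν` for all `a` and `u ν = u` again form a nonempty closed subsemigroup; for an idempotent
`ω'` in it, `ω = ν ω'` is the required idempotent.
-/

open Filter

attribute [local instance] Ultrafilter.semigroup Ultrafilter.mul

namespace Ultrafilter

theorem continuous_map {α β : Type*} (f : α → β) : Continuous (Ultrafilter.map f) :=
  ultrafilterBasis_is_basis.continuous_iff.2 <| Set.forall_mem_range.2 fun s =>
    ultrafilter_isOpen_basic (f ⁻¹' s)

section Mul

variable {M : Type*} [Mul M]

theorem map_mul {N F : Type*} [Mul N] [FunLike F M N] [MulHomClass F M N] (f : F)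
    (U V : Ultrafilter M) : (U * V).map f = U.map f * V.map f := by
  ext s
  change {x | {y | f (x * y) ∈ s} ∈ V} ∈ U ↔ {x | {y | f x * f y ∈ s} ∈ V} ∈ U
  simp only [_root_.map_mul]

theorem mem_mul_of_mem_left {I : Set M} (hIM : ∀ x ∈ I, ∀ y, x * y ∈ I) {U : Ultrafilter M}
    (h : I ∈ U) (V : Ultrafilter M) : I ∈ U * V :=
  show {x | {y | x * y ∈ I} ∈ V} ∈ U from mem_of_superset h fun x hx => univ_mem' (hIM x hx)

theorem mem_mul_of_mem_right {I : Set M} (hMI : ∀ x, ∀ y ∈ I, x * y ∈ I) (U : Ultrafilter M)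
    {V : Ultrafilter M} (h : I ∈ V) : I ∈ U * V :=
  show {x | {y | x * y ∈ I} ∈ V} ∈ U from univ_mem' fun x => mem_of_superset h (hMI x)

end Mul

theorem exists_idempotent_of_isClosed {M : Type*} [Semigroup M] {s : Set (Ultrafilter M)}
    (hne : s.Nonempty) (hs : IsClosed s) (hmul : ∀ u ∈ s, ∀ v ∈ s, u * v ∈ s) :
    ∃ u ∈ s, u * u = u :=
  exists_idempotent_in_compact_subsemigroup continuous_mul_left s hne hs.isCompact hmul

section Retractions

variable {M ι : Type*} [Semigroup M] {I : Set M} {σ : ι → M →ₙ* M}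

theorem exists_idempotent_map_eq (hIM : ∀ x ∈ I, ∀ y, x * y ∈ I)
    {q : Ultrafilter M} (hqI : I ∈ q) (hq : ∀ i j, q.map (σ i) = q.map (σ j)) :
    ∃ u : Ultrafilter M, u * u = u ∧ I ∈ u ∧ ∀ i j, u.map (σ i) = u.map (σ j) := by
  let C : Set (Ultrafilter M) := {u | I ∈ u ∧ ∀ i j, u.map (σ i) = u.map (σ j)}
  have hC : IsClosed C := by
    simp only [C, Set.ofPred_and, Set.ofPred_forall]
    exact (ultrafilter_isClosed_basic I).inter <| isClosed_iInter fun i => isClosed_iInter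
      fun j => isClosed_eq (continuous_map _) (continuous_map _)
  have hCmul : ∀ u ∈ C, ∀ v ∈ C, u * v ∈ C := by
    rintro u ⟨huI, hu⟩ v ⟨-, hv⟩
    exact ⟨mem_mul_of_mem_left hIM huI v, fun i j => by rw [map_mul, map_mul, hu i j, hv i j]⟩
  obtain ⟨u, ⟨huI, hu⟩, huu⟩ := exists_idempotent_of_isClosed (s := C) ⟨q, hqI, hq⟩ hC hCmul
  exact ⟨u, huu, huI, hu⟩

theorem exists_idempotent_mul_right_eq_map_eq (hIM : ∀ x ∈ I, ∀ y, x * y ∈ I)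
    {ν : Ultrafilter M} (hνν : ν * ν = ν) (hνσ : ∀ i, ν.map (σ i) = ν)
    {u : Ultrafilter M} (huI : I ∈ u) (huσ : ∀ i, u.map (σ i) = ν) :
    ∃ ω : Ultrafilter M, ω * ω = ω ∧ ω * ν = ω ∧ I ∈ ω ∧ ∀ i, ω.map (σ i) = ν := by
  let G : Set (Ultrafilter M) := {w | I ∈ w ∧ (∀ i, w.map (σ i) = ν) ∧ w * ν = w}
  have hG : IsClosed G := by
    simp only [G, Set.ofPred_and, Set.ofPred_forall]
    exact (ultrafilter_isClosed_basic I).inter <|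
      (isClosed_iInter fun i => isClosed_eq (continuous_map _) continuous_const).inter
        (isClosed_eq (continuous_mul_left ν) continuous_id)
  have hGmul : ∀ w ∈ G, ∀ v ∈ G, w * v ∈ G := by
    rintro w ⟨hwI, hw, -⟩ v ⟨-, hv, hvν⟩
    exact ⟨mem_mul_of_mem_left hIM hwI v, fun i => by rw [map_mul, hw, hv, hνν],
      by rw [mul_assoc, hvν]⟩
  have huν : u * ν ∈ G :=
    ⟨mem_mul_of_mem_left hIM huI ν, fun i => by rw [map_mul, huσ, hνσ, hνν],
      by rw [mul_assoc, hνν]⟩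
  obtain ⟨ω, ⟨hωI, hωσ, hων⟩, hωω⟩ := exists_idempotent_of_isClosed ⟨_, huν⟩ hG hGmul
  exact ⟨ω, hωω, hων, hωI, hωσ⟩

theorem exists_idempotents_of_retractions [Nonempty ι]
    (hIM : ∀ x ∈ I, ∀ y, x * y ∈ I) (hMI : ∀ x, ∀ y ∈ I, x * y ∈ I)
    (hσ : ∀ i j x, σ i (σ j x) = σ j x)
    {q : Ultrafilter M} (hqI : I ∈ q) (hq : ∀ i j, q.map (σ i) = q.map (σ j)) :
    ∃ ν ω : Ultrafilter M, ν * ν = ν ∧ ω * ω = ω ∧ ω * ν = ω ∧ ν * ω = ω ∧ I ∈ ω ∧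
      ∀ i, ω.map (σ i) = ν := by
  obtain ⟨u, huu, huI, hu⟩ := exists_idempotent_map_eq hIM hqI hq
  let i₀ := Classical.arbitrary ι
  let ν := u.map (σ i₀)
  have hνν : ν * ν = ν := by rw [← map_mul, huu]
  have hνσ : ∀ i, ν.map (σ i) = ν := fun i => by
    rw [map_map]
    exact congrArg (u.map ·) (funext (hσ i i₀))
  obtain ⟨ω, hωω, hων, hωI, hωσ⟩ :=
    exists_idempotent_mul_right_eq_map_eq hIM hνν hνσ huI fun i => hu i i₀
  refine ⟨ν, ν * ω, hνν, ?_, by rw [mul_assoc, hων], by rw [← mul_assoc, hνν],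
    mem_mul_of_mem_right hMI ν hωI, fun i => by rw [map_mul, hνσ, hωσ, hνν]⟩
  rw [mul_assoc, ← mul_assoc ω, hων, hωω]

end Retractions

end Ultrafilter

abbrev List.appendSemigroup (α : Type*) : Semigroup (List α) where
  mul := (· ++ ·)
  mul_assoc := List.append_assoc

attribute [local instance] List.appendSemigroup

theorem uProd_append_eq_mul {α : Type*} (U V : Ultrafilter (List α)) :
    uProd (· ++ ·) U V = U * V :=
  Ultrafilter.ext fun _ => Iff.rfl

section Words

variable {A : Type*}

def HJsubstHom (a : A) : List (Option A) →ₙ* List (Option A) where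
  toFun := HJsubst a
  map_mul' _ _ := List.map_append

theorem HJsubst_HJsubst (a b : A) (w : List (Option A)) :
    HJsubst a (HJsubst b w) = HJsubst b w := by
  simp [HJsubst, Function.comp_def]

theorem HJsubst_mem_HJW0 (a : A) {w : List (Option A)} (hw : w ∈ HJW1 A) :
    HJsubst a w ∈ HJW0 A :=
  ⟨by simpa [HJsubst] using hw.1, by simp [HJsubst]⟩

theorem append_mem_HJW1_left {x : List (Option A)} (hx : x ∈ HJW1 A) (y : List (Option A)) :
    x ++ y ∈ HJW1 A :=
  ⟨List.append_ne_nil_of_left_ne_nil hx.1 y, List.mem_append_left y hx.2⟩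

theorem append_mem_HJW1_right (x : List (Option A)) {y : List (Option A)} (hy : y ∈ HJW1 A) :
    x ++ y ∈ HJW1 A :=
  ⟨List.append_ne_nil_of_right_ne_nil x hy.1, List.mem_append_right x hy.2⟩

theorem exists_mem_HJW1_HJsubst_mono [Finite A] {κ : Type*} [Finite κ]
    (c : List (Option A) → κ) : ∃ w ∈ HJW1 A, ∀ a b, c (HJsubst a w) = c (HJsubst b w) := by
  obtain ⟨ι, _, hι⟩ := Combinatorics.Line.exists_mono_in_high_dimension A κ
  let e := Fintype.equivFin ι
  let word : (ι → Option A) → List (Option A) := fun g => List.ofFn (g ∘ e.symm)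
  obtain ⟨l, _, hl⟩ := hι fun v => c (word (some ∘ v))
  have hsubst : ∀ a, HJsubst a (word l.idxFun) = word (some ∘ l a) := fun a => by
    simp only [word, HJsubst, List.map_ofFn]
    rfl
  obtain ⟨i, hi⟩ := l.proper
  have hx : none ∈ word l.idxFun := List.mem_ofFn.2 ⟨e i, by simp [hi]⟩
  refine ⟨word l.idxFun, ⟨List.ne_nil_of_mem hx, hx⟩, fun a b => ?_⟩
  rw [hsubst, hsubst]
  exact (hl a).trans (hl b).symm

theorem exists_ultrafilter_HJW1_map_HJsubst_eq [Finite A] :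
    ∃ q : Ultrafilter (List (Option A)), HJW1 A ∈ q ∧
      ∀ a b, q.map (HJsubst a) = q.map (HJsubst b) := by
  let S : Finset (Set (List (Option A))) → Set (List (Option A)) := fun F =>
    {w ∈ HJW1 A | ∀ B ∈ F, ∀ a b, HJsubst a w ∈ B → HJsubst b w ∈ B}
  have hS : Antitone fun F => 𝓟 (S F) := fun F G hFG =>
    principal_mono.2 fun w hw => ⟨hw.1, fun B hB => hw.2 B (hFG hB)⟩
  have hSne : ∀ F, (𝓟 (S F)).NeBot := fun F => by
    obtain ⟨w, hw, hmono⟩ := exists_mem_HJW1_HJsubst_mono fun w (B : F) => w ∈ B.1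
    exact principal_neBot_iff.2 ⟨w, hw, fun B hB a b => (congrFun (hmono a b) ⟨B, hB⟩).mp⟩
  have := iInf_neBot_of_directed' hS.directed_ge hSne
  let q := Ultrafilter.of (⨅ F, 𝓟 (S F))
  have hSq : ∀ F, S F ∈ q := fun F =>
    Ultrafilter.of_le _ (mem_iInf_of_mem F (mem_principal_self _))
  refine ⟨q, mem_of_superset (hSq ∅) fun w hw => hw.1, fun a b => Ultrafilter.eq_of_le ?_⟩
  intro B (hB : HJsubst b ⁻¹' B ∈ q)
  exact show HJsubst a ⁻¹' B ∈ q from mem_of_superset (inter_mem (hSq {B}) hB) fun w hw =>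
    hw.1.2 B (Finset.mem_singleton_self B) b a hw.2

end Words

/-- There are ultrafilters `ν` and `ω` on `T = W₀ ∪ W₁` (words under concatenation),
concentrated on `W₀` and `W₁` respectively, such that `ν·ν = ν`, `ω·ω = ω`,
`ω·ν = ν·ω = ω`, and the pushforward of `ω` along every substitution map `u ↦ u[a]`
is `ν`. -/
theorem hales_jewett_idempotents (A : Type*) [Fintype A] [Nonempty A] :
    ∃ ν ω : Ultrafilter (List (Option A)),
      HJW0 A ∈ ν ∧ HJW1 A ∈ ω ∧
      uProd (· ++ ·) ν ν = ν ∧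
      uProd (· ++ ·) ω ω = ω ∧
      uProd (· ++ ·) ω ν = ω ∧
      uProd (· ++ ·) ν ω = ω ∧
      ∀ a : A, Ultrafilter.map (HJsubst a) ω = ν := by
  obtain ⟨q, hqW₁, hq⟩ := exists_ultrafilter_HJW1_map_HJsubst_eq (A := A)
  obtain ⟨ν, ω, hνν, hωω, hων, hνω, hωW₁, hωσ⟩ :=
    Ultrafilter.exists_idempotents_of_retractions (σ := HJsubstHom)
      (fun x hx y => append_mem_HJW1_left hx y) (fun x y hy => append_mem_HJW1_right x hy)
      HJsubst_HJsubst hqW₁ hq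
  have hνW₀ : HJW0 A ∈ ν := by
    rw [← hωσ (Classical.arbitrary A)]
    exact Ultrafilter.mem_map.2 (mem_of_superset hωW₁ fun _ => HJsubst_mem_HJW0 _)
  simp only [uProd_append_eq_mul]
  exact ⟨ν, ω, hνW₀, hωW₁, hνν, hωω, hων, hνω, hωσ⟩
end
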